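/- Let {x, x₁} be a Bertrand D-pair with constant λ ≠ 0, correspondence s and angle function θ. Then for every s₁ the geodesic curvature of x₁ is given by k_{g₁}(s₁) = [(1 + λ k_g(s(s₁))) cos θ(s₁) − λ τ_g(s(s₁)) sin θ(s₁)] · [k_g(s(s₁)) + λ k_g(s(s₁))² + λ τ_g(s(s₁))²] · (s'(s₁))³. -/

import Mathlib

open scoped ContDiff

noncomputable section

abbrev E3 := EuclideanSpace ℝ (Fin 3)

/-- Cross product on `EuclideanSpace ℝ (Fin 3)`. -/
def cross3 (a b : E3) : E3 :=
  WithLp.toLp 2 ![a 1 * b 2 - a 2 * b 1, a 2 * b 0 - a 0 * b 2, a 0 * b 1 - a 1 * b 0]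

/-- Darboux frame vector `g = n × T`, where `T = x'`. -/
def gvec (x n : ℝ → E3) : ℝ → E3 := fun t => cross3 (n t) (deriv x t)

/-- Geodesic curvature `k_g = ⟪T', g⟫`. -/
def geodCurv (x n : ℝ → E3) : ℝ → ℝ := fun t => (inner ℝ (deriv (deriv x) t) (gvec x n t) : ℝ)

/-- Normal curvature `k_n = ⟪T', n⟫`. -/
def normCurv (x n : ℝ → E3) : ℝ → ℝ := fun t => (inner ℝ (deriv (deriv x) t) (n t) : ℝ)

/-- Geodesic torsion `τ_g = ⟪g', n⟫`. -/
def geodTors (x n : ℝ → E3) : ℝ → ℝ := fun t => (inner ℝ (deriv (gvec x n) t) (n t) : ℝ)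

/-- A unit-speed smooth curve `x` on an oriented surface, encoded by a smooth unit
normal field `n` along `x` orthogonal to the tangent. -/
def IsDarbouxCurve (x n : ℝ → E3) : Prop :=
  ContDiff ℝ (⊤ : ℕ∞) x ∧ ContDiff ℝ (⊤ : ℕ∞) n ∧ (∀ t, ‖deriv x t‖ = 1) ∧ (∀ t, ‖n t‖ = 1) ∧
    ∀ t, (inner ℝ (n t) (deriv x t) : ℝ) = 0

/-- `{x, x₁}` is a Bertrand D-pair with constant `lam ≠ 0`, smooth increasing
correspondence `s` and smooth angle function `θ`. -/
def IsBertrandDPair (x n x₁ n₁ : ℝ → E3) (lam : ℝ) (s θ : ℝ → ℝ) : Prop :=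
  IsDarbouxCurve x n ∧ IsDarbouxCurve x₁ n₁ ∧ lam ≠ 0 ∧
    ContDiff ℝ (⊤ : ℕ∞) s ∧ (∀ t, 0 < deriv s t) ∧
    (∀ t, x (s t) = x₁ t + lam • gvec x₁ n₁ t) ∧
    (∀ t, gvec x n (s t) = gvec x₁ n₁ t) ∧
    ContDiff ℝ (⊤ : ℕ∞) θ ∧
    (∀ t, deriv x (s t) = Real.cos (θ t) • deriv x₁ t - Real.sin (θ t) • n₁ t) ∧
    (∀ t, n (s t) = Real.sin (θ t) • deriv x₁ t + Real.cos (θ t) • n₁ t)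

lemma inner3 (a b : E3) : (inner ℝ a b : ℝ) = a 0 * b 0 + a 1 * b 1 + a 2 * b 2 := by
  simp [PiLp.inner_apply, Fin.sum_univ_three, RCLike.inner_apply, conj_trivial]; ring

lemma cross3_0 (a b : E3) : cross3 a b 0 = a 1 * b 2 - a 2 * b 1 := rfl
lemma cross3_1 (a b : E3) : cross3 a b 1 = a 2 * b 0 - a 0 * b 2 := rfl
lemma cross3_2 (a b : E3) : cross3 a b 2 = a 0 * b 1 - a 1 * b 0 := rfl

lemma inner_cross_right (a b : E3) : (inner ℝ (cross3 a b) b : ℝ) = 0 := by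
  rw [inner3, cross3_0, cross3_1, cross3_2]; ring

lemma inner_cross_left (a b : E3) : (inner ℝ (cross3 a b) a : ℝ) = 0 := by
  rw [inner3, cross3_0, cross3_1, cross3_2]; ring

lemma contDiff_cross {f g : ℝ → E3} (hf : ContDiff ℝ ∞ f) (hg : ContDiff ℝ ∞ g) :
    ContDiff ℝ ∞ (fun t => cross3 (f t) (g t)) := by
  have hfc : ∀ i : Fin 3, ContDiff ℝ ∞ (fun t => f t i) := fun i => by
    exact ((EuclideanSpace.proj i : E3 →L[ℝ] ℝ)).contDiff.comp hf
  have hgc : ∀ i : Fin 3, ContDiff ℝ ∞ (fun t => g t i) := fun i => by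
    exact ((EuclideanSpace.proj i : E3 →L[ℝ] ℝ)).contDiff.comp hg
  have key : ContDiff ℝ ∞ (fun t => (fun i => cross3 (f t) (g t) i : Fin 3 → ℝ)) := by
    apply contDiff_pi.2
    intro i
    fin_cases i <;>
      simp only [cross3, Matrix.cons_val_zero, Matrix.cons_val_one, Matrix.head_cons,
        Matrix.cons_val_two, Matrix.tail_cons, Fin.isValue] <;>
      exact ((hfc _).mul (hgc _)).sub ((hfc _).mul (hgc _))
  exact ((EuclideanSpace.equiv (Fin 3) ℝ).symm.contDiff).comp key

theorem bertrand_D_stmt_14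
    (x n x₁ n₁ : ℝ → E3) (lam : ℝ) (s θ : ℝ → ℝ)
    (hpair : IsBertrandDPair x n x₁ n₁ lam s θ) :
    ∀ t, geodCurv x₁ n₁ t =
      ((1 + lam * geodCurv x n (s t)) * Real.cos (θ t) - lam * geodTors x n (s t) * Real.sin (θ t)) *
        (geodCurv x n (s t) + lam * (geodCurv x n (s t)) ^ 2 + lam * (geodTors x n (s t)) ^ 2) * (deriv s t) ^ 3 := by
  obtain ⟨hx, hx₁, hlam, hsC, hspos, hXeq, hGeq, hθC, hTrot, hNrot⟩ := hpair
  obtain ⟨hxC, hnC, hxu, hnu, hxo⟩ := hx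
  obtain ⟨hx1C, hn1C, hx1u, hn1u, hx1o⟩ := hx₁
  have hxd : Differentiable ℝ x := hxC.differentiable (by simp)
  have hTC : ContDiff ℝ ∞ (deriv x) := (contDiff_infty_iff_deriv.mp (hxC.of_le (by simp))).2
  have hTd : Differentiable ℝ (deriv x) := hTC.differentiable (by norm_num)
  have hgC : ContDiff ℝ ∞ (gvec x n) := contDiff_cross (hnC.of_le (by simp)) hTC
  have hgd : Differentiable ℝ (gvec x n) := hgC.differentiable (by norm_num)
  have hnd : Differentiable ℝ n := hnC.differentiable (by simp)
  have hsd : Differentiable ℝ s := hsC.differentiable (by simp)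
  have hθd : Differentiable ℝ θ := hθC.differentiable (by simp)
  -- derivative of ⟪g,T⟫ = 0
  have hgT : ∀ u, (inner ℝ (deriv (gvec x n) u) (deriv x u) : ℝ) = - geodCurv x n u := by
    intro u
    have H : HasDerivAt (fun r => (inner ℝ (gvec x n r) (deriv x r) : ℝ))
        ((inner ℝ (gvec x n u) (deriv (deriv x) u) : ℝ) + inner ℝ (deriv (gvec x n) u) (deriv x u)) u :=
      HasDerivAt.inner ℝ ((hgd u).hasDerivAt) ((hTd u).hasDerivAt)
    have H0 : (fun r => (inner ℝ (gvec x n r) (deriv x r) : ℝ)) = fun _ => 0 :=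
      funext fun r => inner_cross_right _ _
    rw [H0] at H
    have hz := H.unique (hasDerivAt_const u 0)
    have hc : (inner ℝ (gvec x n u) (deriv (deriv x) u) : ℝ) = geodCurv x n u :=
      real_inner_comm _ _
    simp only [geodCurv] at *
    linarith
  -- derivative of ⟪g,n⟫ = 0
  have hgN : ∀ u, (inner ℝ (deriv n u) (gvec x n u) : ℝ) = - geodTors x n u := by
    intro u
    have H : HasDerivAt (fun r => (inner ℝ (gvec x n r) (n r) : ℝ))
        ((inner ℝ (gvec x n u) (deriv n u) : ℝ) + inner ℝ (deriv (gvec x n) u) (n u)) u :=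
      HasDerivAt.inner ℝ ((hgd u).hasDerivAt) ((hnd u).hasDerivAt)
    have H0 : (fun r => (inner ℝ (gvec x n r) (n r) : ℝ)) = fun _ => 0 :=
      funext fun r => inner_cross_left _ _
    rw [H0] at H
    have hz := H.unique (hasDerivAt_const u 0)
    have hc : (inner ℝ (gvec x n u) (deriv n u) : ℝ) = inner ℝ (deriv n u) (gvec x n u) :=
      real_inner_comm _ _
    simp only [geodTors] at *
    linarith
  have hGt : ∀ u, (inner ℝ (deriv x u) (gvec x n u) : ℝ) = 0 := fun u => by
    rw [real_inner_comm]; exact inner_cross_right _ _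
  have hNg : ∀ u, (inner ℝ (n u) (gvec x n u) : ℝ) = 0 := fun u => by
    rw [real_inner_comm]; exact inner_cross_left _ _
  -- x₁ in terms of x
  have hx1eq : x₁ = fun τ => x (s τ) - lam • gvec x n (s τ) := by
    funext τ; rw [hGeq τ, hXeq τ]; abel
  have hT1 : ∀ τ, deriv x₁ τ = deriv s τ • (deriv x (s τ) - lam • deriv (gvec x n) (s τ)) := by
    intro τ
    have h2 : HasDerivAt s (deriv s τ) τ := (hsd τ).hasDerivAt
    have hxs : HasDerivAt (fun r => x (s r)) (deriv s τ • deriv x (s τ)) τ := by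
      exact HasDerivAt.scomp (𝕜' := ℝ) τ ((hxd (s τ)).hasDerivAt) h2
    have hgs : HasDerivAt (fun r => gvec x n (s r)) (deriv s τ • deriv (gvec x n) (s τ)) τ := by
      exact HasDerivAt.scomp (𝕜' := ℝ) τ ((hgd (s τ)).hasDerivAt) h2
    have hall : HasDerivAt x₁
        (deriv s τ • deriv x (s τ) - lam • (deriv s τ • deriv (gvec x n) (s τ))) τ := by
      rw [hx1eq]; exact hxs.sub (hgs.const_smul lam)
    rw [hall.deriv]; module
  intro t
  -- inner products of T₁ with T∘s and n∘s
  have hTT : (inner ℝ (deriv x₁ t) (deriv x₁ t) : ℝ) = 1 := by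
    rw [real_inner_self_eq_norm_mul_norm, hx1u t]; norm_num
  have hTn : (inner ℝ (deriv x₁ t) (n₁ t) : ℝ) = 0 := by
    rw [real_inner_comm]; exact hx1o t
  have e1 : (inner ℝ (deriv x₁ t) (deriv x (s t)) : ℝ) = Real.cos (θ t) := by
    rw [hTrot t, inner_sub_right, real_inner_smul_right, real_inner_smul_right, hTT, hTn]; ring
  have e2 : (inner ℝ (deriv x₁ t) (deriv x (s t)) : ℝ)
      = deriv s t * (1 + lam * geodCurv x n (s t)) := by
    rw [hT1 t, real_inner_smul_left, inner_sub_left, real_inner_smul_left]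
    have h1 : (inner ℝ (deriv x (s t)) (deriv x (s t)) : ℝ) = 1 := by
      rw [real_inner_self_eq_norm_mul_norm, hxu (s t)]; norm_num
    rw [h1, hgT (s t)]; ring
  have hcos : Real.cos (θ t) = deriv s t * (1 + lam * geodCurv x n (s t)) := by
    rw [← e1, e2]
  have f1 : (inner ℝ (deriv x₁ t) (n (s t)) : ℝ) = Real.sin (θ t) := by
    rw [hNrot t, inner_add_right, real_inner_smul_right, real_inner_smul_right, hTT, hTn]; ring
  have f2 : (inner ℝ (deriv x₁ t) (n (s t)) : ℝ) = -(deriv s t * (lam * geodTors x n (s t))) := by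
    rw [hT1 t, real_inner_smul_left, inner_sub_left, real_inner_smul_left]
    have h1 : (inner ℝ (deriv x (s t)) (n (s t)) : ℝ) = 0 := by
      rw [real_inner_comm]; exact hxo (s t)
    have h2 : (inner ℝ (deriv (gvec x n) (s t)) (n (s t)) : ℝ) = geodTors x n (s t) := rfl
    rw [h1, h2]; ring
  have hsin : Real.sin (θ t) = -(deriv s t * (lam * geodTors x n (s t))) := by
    rw [← f1, f2]
  -- second derivative of x₁
  have hdx1 : deriv x₁ = fun τ => Real.cos (θ τ) • deriv x (s τ) + Real.sin (θ τ) • n (s τ) := by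
    funext τ
    rw [hTrot τ, hNrot τ]
    have h := Real.sin_sq_add_cos_sq (θ τ)
    match_scalars <;> nlinarith [h]
  have hθt : HasDerivAt θ (deriv θ t) t := (hθd t).hasDerivAt
  have hst : HasDerivAt s (deriv s t) t := (hsd t).hasDerivAt
  have hcosd : HasDerivAt (fun τ => Real.cos (θ τ)) (-Real.sin (θ t) * deriv θ t) t := by
    exact (Real.hasDerivAt_cos (θ t)).comp t hθt
  have hsind : HasDerivAt (fun τ => Real.sin (θ τ)) (Real.cos (θ t) * deriv θ t) t := by
    exact (Real.hasDerivAt_sin (θ t)).comp t hθt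
  have hTs : HasDerivAt (fun τ => deriv x (s τ)) (deriv s t • deriv (deriv x) (s t)) t := by
    exact HasDerivAt.scomp (𝕜' := ℝ) t ((hTd (s t)).hasDerivAt) hst
  have hNs : HasDerivAt (fun τ => n (s τ)) (deriv s t • deriv n (s t)) t := by
    exact HasDerivAt.scomp (𝕜' := ℝ) t ((hnd (s t)).hasDerivAt) hst
  have hD : HasDerivAt (deriv x₁)
      ((Real.cos (θ t) • (deriv s t • deriv (deriv x) (s t))
          + (-Real.sin (θ t) * deriv θ t) • deriv x (s t))
        + (Real.sin (θ t) • (deriv s t • deriv n (s t))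
          + (Real.cos (θ t) * deriv θ t) • n (s t))) t := by
    rw [hdx1]; exact (hcosd.smul hTs).add (hsind.smul hNs)
  have key : geodCurv x₁ n₁ t
      = Real.cos (θ t) * (deriv s t * geodCurv x n (s t))
        + Real.sin (θ t) * (deriv s t * (- geodTors x n (s t))) := by
    have hv1 : (inner ℝ (deriv (deriv x) (s t)) (gvec x n (s t)) : ℝ) = geodCurv x n (s t) := rfl
    simp only [geodCurv]
    rw [hD.deriv, ← hGeq t]
    simp only [inner_add_left, real_inner_smul_left]
    rw [hv1, hGt (s t), hgN (s t), hNg (s t)]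
    ring
  rw [key]
  have hp := Real.sin_sq_add_cos_sq (θ t)
  rw [hcos, hsin] at hp
  rw [hcos, hsin]
  linear_combination (-(deriv s t)^2 * (geodCurv x n (s t) + lam * geodCurv x n (s t)^2
    + lam * geodTors x n (s t)^2)) * hp
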